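/- arXiv:2007.09643 — 6 statements merged into one kernel-verified Lean document; each statement's English description precedes it below -/
import Mathlib

section
/- With xᵢ, yᵢ as in the exact solution for the perfect Mondrian 7-partition (x₁ = (8+√19)/15, y₁ = (8-√19)/21, x₂ = (7-√19)/15, y₂ = (7+√19)/14, x₃ = (7+√19)/15, y₃ = (7-√19)/14, x₄ = (8-√19)/15, y₄ = (8+√19)/21, x₅ = 3/5, y₅ = 5/21, x₆ = (-1+√19)/15, y₆ = (5+5√19)/42, x₇ = (1+√19)/15, y₇ = (-5+5√19)/42), the seven rectangles are pairwise non-congruent: for all i ≠ j, the unordered pair {xᵢ, yᵢ} differs from {xⱼ, yⱼ}. -/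
open Real

private lemma vec7_five {α : Type*} (a b c d e f g : α) :
    ![a, b, c, d, e, f, g] 5 = f := rfl

private lemma vec7_six {α : Type*} (a b c d e f g : α) :
    ![a, b, c, d, e, f, g] 6 = g := rfl

set_option maxHeartbeats 1600000 in
theorem mondrian7_noncongruent (x y : Fin 7 → ℝ)
    (hx : x = ![(8 + Real.sqrt 19) / 15, (7 - Real.sqrt 19) / 15,
      (7 + Real.sqrt 19) / 15, (8 - Real.sqrt 19) / 15, 3 / 5,
      (-1 + Real.sqrt 19) / 15, (1 + Real.sqrt 19) / 15])
    (hy : y = ![(8 - Real.sqrt 19) / 21, (7 + Real.sqrt 19) / 14,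
      (7 - Real.sqrt 19) / 14, (8 + Real.sqrt 19) / 21, 5 / 21,
      (5 + 5 * Real.sqrt 19) / 42, (-5 + 5 * Real.sqrt 19) / 42]) :
    ∀ i j : Fin 7, i ≠ j → ({x i, y i} : Set ℝ) ≠ {x j, y j} := by
  have hsq : Real.sqrt 19 ^ 2 = 19 := Real.sq_sqrt (by norm_num)
  have h0 : (0:ℝ) ≤ Real.sqrt 19 := Real.sqrt_nonneg _
  have h1 : (4.35:ℝ) < Real.sqrt 19 := by nlinarith
  have h2 : Real.sqrt 19 < 4.36 := by nlinarith
  subst hx hy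
  intro i j hij h
  have hm : (![(8 + Real.sqrt 19) / 15, (7 - Real.sqrt 19) / 15,
      (7 + Real.sqrt 19) / 15, (8 - Real.sqrt 19) / 15, 3 / 5,
      (-1 + Real.sqrt 19) / 15, (1 + Real.sqrt 19) / 15] i : ℝ) ∈
      ({![(8 + Real.sqrt 19) / 15, (7 - Real.sqrt 19) / 15,
      (7 + Real.sqrt 19) / 15, (8 - Real.sqrt 19) / 15, 3 / 5,
      (-1 + Real.sqrt 19) / 15, (1 + Real.sqrt 19) / 15] j,
      ![(8 - Real.sqrt 19) / 21, (7 + Real.sqrt 19) / 14,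
      (7 - Real.sqrt 19) / 14, (8 + Real.sqrt 19) / 21, 5 / 21,
      (5 + 5 * Real.sqrt 19) / 42, (-5 + 5 * Real.sqrt 19) / 42] j} : Set ℝ) := by
    rw [← h]; exact Set.mem_insert _ _
  clear h
  fin_cases i <;> fin_cases j <;>
    first
      | exact absurd rfl hij
      | (rw [Set.mem_insert_iff, Set.mem_singleton_iff] at hm
         rcases hm with hm | hm <;> simp [vec7_five, vec7_six] at hm <;> nlinarith [hm])
end

section
/- If x₁ = 5/7 in the spiral 7-partition equations, then the resulting rectangles satisfy R₁ ≅ R₄ and R₂ ≅ R₃; specifically, with x₂ = 1 - x₁, y₂ = 1/(7x₂), y₃ = 1 - y₂, x₃ = 1/(7y₃), x₄ = 1 - x₃, y₄ = 1/(7x₄), y₁ = 1/(7x₁), one has {x₁, y₁} = {x₄, y₄} and {x₂, y₂} = {x₃, y₃} as unordered pairs. -/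
open Real

theorem spiral7_degenerate (x₁ y₁ x₂ y₂ x₃ y₃ x₄ y₄ : ℝ)
    (hx₁ : x₁ = 5 / 7) (hy₁ : y₁ = 1 / (7 * x₁))
    (hx₂ : x₂ = 1 - x₁) (hy₂ : y₂ = 1 / (7 * x₂))
    (hy₃ : y₃ = 1 - y₂) (hx₃ : x₃ = 1 / (7 * y₃))
    (hx₄ : x₄ = 1 - x₃) (hy₄ : y₄ = 1 / (7 * x₄)) :
    ({x₁, y₁} : Set ℝ) = {x₄, y₄} ∧ ({x₂, y₂} : Set ℝ) = {x₃, y₃} := by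
  subst hx₁ hy₁ hx₂ hy₂ hy₃ hx₃ hx₄ hy₄
  norm_num
end

section
/- The number z₂ = (153 + 3√41 + √(4386 - 426√41))/256 is a root of the polynomial 512x⁴ - 1224x³ + 1023x² - 342x + 36, and z₂ < z₁ where z₁ = (153 - 3√41 + √(4386 + 426√41))/256. -/
open Real

theorem quartic_root_z2 :
    let z₁ : ℝ := (153 - 3 * Real.sqrt 41 + Real.sqrt (4386 + 426 * Real.sqrt 41)) / 256
    let z₂ : ℝ := (153 + 3 * Real.sqrt 41 + Real.sqrt (4386 - 426 * Real.sqrt 41)) / 256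
    512 * z₂ ^ 4 - 1224 * z₂ ^ 3 + 1023 * z₂ ^ 2 - 342 * z₂ + 36 = 0 ∧ z₂ < z₁ := by
  intro z₁ z₂
  set s : ℝ := Real.sqrt 41 with hs
  have hs2 : s ^ 2 = 41 := Real.sq_sqrt (by norm_num)
  have hs6 : 6 ≤ s := by
    have : (6:ℝ) = Real.sqrt 36 := by rw [show (36:ℝ) = 6^2 by norm_num, Real.sqrt_sq]; norm_num
    rw [this, hs]; exact Real.sqrt_le_sqrt (by norm_num)
  have hs7 : s ≤ 7 := by
    rw [hs, show (7:ℝ) = Real.sqrt 49 by rw [show (49:ℝ)=7^2 by norm_num, Real.sqrt_sq]; norm_num]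
    exact Real.sqrt_le_sqrt (by norm_num)
  set t : ℝ := Real.sqrt (4386 - 426 * s) with ht
  set u : ℝ := Real.sqrt (4386 + 426 * s) with hu
  have ht0 : 0 ≤ t := Real.sqrt_nonneg _
  have hu0 : 0 ≤ u := Real.sqrt_nonneg _
  have ht2 : t ^ 2 = 4386 - 426 * s := Real.sq_sqrt (by nlinarith)
  have hu2 : u ^ 2 = 4386 + 426 * s := Real.sq_sqrt (by nlinarith)
  constructor
  · show 512 * ((153 + 3*s + t)/256) ^ 4 - 1224 * ((153 + 3*s + t)/256) ^ 3
      + 1023 * ((153 + 3*s + t)/256) ^ 2 - 342 * ((153 + 3*s + t)/256) + 36 = 0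
    linear_combination (336051/8388608 + 81/8388608 * s^2 + 27/2097152 * s * t
      - 5751/2097152 * s - 639/1048576 * t) * hs2
      + (-1281/2097152 + 27/4194304 * s^2 + 3/2097152 * s * t + 1/8388608 * t^2
      - 213/4194304 * s) * ht2
  · show (153 + 3*s + t)/256 < (153 - 3*s + u)/256
    have h1 : s * t < 71 * s - 123 := by
      nlinarith [sq_nonneg (s*t), mul_nonneg (le_trans (by norm_num) hs6) ht0]
    have h2 : (t + 6*s)^2 < u^2 := by nlinarith
    have h3 : t + 6*s < u := by nlinarith [sq_nonneg (u - (t + 6*s))]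
    linarith
end

section
/- Let {(xᵢ, yᵢ)}ᵢ₌₁..k be the dimensions of a perfect Mondrian k-partition of an a×b rectangle (so xᵢyᵢ = ab/k for all i, and for i ≠ j the unordered pairs {xᵢ,yᵢ} ≠ {xⱼ,yⱼ}). Let a', b' > 0 and set x'ᵢ = (a'/a)xᵢ, y'ᵢ = (b'/b)yᵢ. If xᵢxⱼ ≠ (a²/k)(b'/a') for all i ≠ j, then for all i ≠ j the rescaled pairs satisfy {x'ᵢ, y'ᵢ} ≠ {x'ⱼ, y'ⱼ}, and x'ᵢy'ᵢ = a'b'/k for all i. -/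
theorem rescaling_lemma (k : ℕ) (hk : 2 ≤ k) (a b a' b' : ℝ)
    (ha : 0 < a) (hb : 0 < b) (ha' : 0 < a') (hb' : 0 < b')
    (x y : Fin k → ℝ)
    (hxpos : ∀ i, 0 < x i) (hypos : ∀ i, 0 < y i)
    (harea : ∀ i, x i * y i = a * b / k)
    (hmond : ∀ i j, i ≠ j → ({x i, y i} : Set ℝ) ≠ {x j, y j})
    (hcond : ∀ i j, i ≠ j → x i * x j ≠ a ^ 2 / k * (b' / a')) :
    (∀ i j, i ≠ j →
      ({(a' / a) * x i, (b' / b) * y i} : Set ℝ) ≠ {(a' / a) * x j, (b' / b) * y j}) ∧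
    (∀ i, ((a' / a) * x i) * ((b' / b) * y i) = a' * b' / k) := by
  have hk0 : (k : ℝ) ≠ 0 := by positivity
  have ha0 := ha.ne'
  have hb0 := hb.ne'
  have ha'0 := ha'.ne'
  have hb'0 := hb'.ne'
  constructor
  · intro i j hij h
    rw [Set.pair_eq_pair_iff] at h
    rcases h with ⟨h1, h2⟩ | ⟨h1, h2⟩
    · have hx : x i = x j := by
        have := mul_left_cancel₀ (by positivity : (a' / a : ℝ) ≠ 0) h1
        exact this
      have hy : y i = y j := by
        have := mul_left_cancel₀ (by positivity : (b' / b : ℝ) ≠ 0) h2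
        exact this
      exact hmond i j hij (by rw [hx, hy])
    · apply hcond i j hij
      have hj := harea j
      have h3 : a' / a * (x i * x j) = b' / b * (a * b / k) := by
        calc a' / a * (x i * x j) = (a' / a * x i) * x j := by ring
          _ = (b' / b * y j) * x j := by rw [h1]
          _ = b' / b * (x j * y j) := by ring
          _ = b' / b * (a * b / k) := by rw [hj]
      field_simp at h3
      have h4 : a' * (x i * x j) * ↑k = b' * a ^ 2 := by
        apply mul_right_cancel₀ hb0
        linear_combination b * h3
      field_simp
      linear_combination h4
  · intro i
    calc ((a' / a) * x i) * ((b' / b) * y i)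
        = a' * b' / (a * b) * (x i * y i) := by field_simp
      _ = a' * b' / (a * b) * (a * b / k) := by rw [harea i]
      _ = a' * b' / k := by field_simp
end

section
/- In the spiral recursion with k = 7: given x₁ with y₁ = 1/(7x₁), x₂ = 1-x₁, y₂ = 1/(7x₂), y₃ = 1-y₂, x₃ = 1/(7y₃), x₄ = 1-x₃, y₄ = 1/(7x₄), y₅ = 1-y₁-y₄, x₅ = 1/(7y₅), x₆ = 1-x₂-x₅, y₆ = 1-y₁-y₃; the area condition x₆y₆ = 1/7 is equivalent (for x₁ avoiding the poles 0, 1, 6/7, 5/6, and roots of 35x₁²-35x₁+5) to 105x₁³ - 187x₁² + 101x₁ - 15 = 0. -/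
theorem spiral7_area_condition (x₁ y₁ x₂ y₂ y₃ x₃ x₄ y₄ y₅ x₅ x₆ y₆ : ℝ)
    (h0 : x₁ ≠ 0) (h1 : x₁ ≠ 1) (h2 : x₁ ≠ 6 / 7) (h3 : x₁ ≠ 5 / 6)
    (h4 : 35 * x₁ ^ 2 - 35 * x₁ + 5 ≠ 0)
    (hy₁ : y₁ = 1 / (7 * x₁))
    (hx₂ : x₂ = 1 - x₁) (hy₂ : y₂ = 1 / (7 * x₂))
    (hy₃ : y₃ = 1 - y₂) (hx₃ : x₃ = 1 / (7 * y₃))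
    (hx₄ : x₄ = 1 - x₃) (hy₄ : y₄ = 1 / (7 * x₄))
    (hy₅ : y₅ = 1 - y₁ - y₄) (hx₅ : x₅ = 1 / (7 * y₅))
    (hx₆ : x₆ = 1 - x₂ - x₅) (hy₆ : y₆ = 1 - y₁ - y₃) :
    x₆ * y₆ = 1 / 7 ↔ 105 * x₁ ^ 3 - 187 * x₁ ^ 2 + 101 * x₁ - 15 = 0 := by
  have hA : 1 - x₁ ≠ 0 := sub_ne_zero.mpr (Ne.symm h1)
  have hB : 6 - 7 * x₁ ≠ 0 := by
    intro h; apply h2; linarith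
  have hC : 5 - 6 * x₁ ≠ 0 := by
    intro h; apply h3; linarith
  have hy3 : y₃ = (6 - 7 * x₁) / (7 * (1 - x₁)) := by
    rw [hy₃, hy₂, hx₂]; field_simp; ring
  have hy3ne : y₃ ≠ 0 := by
    rw [hy3]; exact div_ne_zero hB (mul_ne_zero (by norm_num) hA)
  have hx3 : x₃ = (1 - x₁) / (6 - 7 * x₁) := by
    rw [hx₃, hy3]; field_simp
  have hx4 : x₄ = (5 - 6 * x₁) / (6 - 7 * x₁) := by
    rw [hx₄, hx3]; field_simp [show 6 - x₁ * 7 ≠ 0 by rwa [mul_comm]]; ring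
  have hx4ne : x₄ ≠ 0 := by rw [hx4]; exact div_ne_zero hC hB
  have hy4 : y₄ = (6 - 7 * x₁) / (7 * (5 - 6 * x₁)) := by
    rw [hy₄, hx4]; field_simp
  have hy5 : y₅ = -(35 * x₁ ^ 2 - 35 * x₁ + 5) / (7 * x₁ * (5 - 6 * x₁)) := by
    rw [hy₅, hy₁, hy4]; field_simp [show 5 - x₁ * 6 ≠ 0 by rwa [mul_comm]]; ring
  have hy5ne : y₅ ≠ 0 := by
    rw [hy5]
    exact div_ne_zero (neg_ne_zero.mpr h4) (mul_ne_zero (mul_ne_zero (by norm_num) h0) hC)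
  have h4n : -(35 * x₁ ^ 2 - 35 * x₁ + 5) ≠ 0 := neg_ne_zero.mpr h4
  have h4n' : -5 + (x₁ * 35 - x₁ ^ 2 * 35) ≠ 0 := by
    intro h; apply h4; linarith
  have hx5 : x₅ = x₁ * (5 - 6 * x₁) / (-(35 * x₁ ^ 2 - 35 * x₁ + 5)) := by
    have h7 : (7 : ℝ) * y₅ ≠ 0 := mul_ne_zero (by norm_num) hy5ne
    rw [hx₅, div_eq_div_iff h7 h4n, hy5]
    field_simp [show 5 - x₁ * 6 ≠ 0 by rwa [mul_comm]]
  have hQ : 7 * x₁ ^ 2 - 7 * x₁ + 1 ≠ 0 := by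
    intro h; apply h4; linarith
  have key : x₆ * y₆ - 1 / 7 =
      -(105 * x₁ ^ 3 - 187 * x₁ ^ 2 + 101 * x₁ - 15) /
        (35 * (x₁ - 1) * (7 * x₁ ^ 2 - 7 * x₁ + 1)) := by
    rw [hx₆, hy₆, hx5, hy₁, hy3, hx₂]
    have hA' : x₁ - 1 ≠ 0 := sub_ne_zero.mpr h1
    field_simp [h4n', h4n, hA', h0, hQ, show x₁ * 35 * (x₁ - 1) + 5 ≠ 0 by intro h; apply h4n; linear_combination -h,
      show x₁ * (x₁ - 1) * 7 + 1 ≠ 0 by intro h; apply hQ; linear_combination h]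
    ring
  constructor
  · intro h
    have : x₆ * y₆ - 1 / 7 = 0 := by rw [h]; ring
    rw [key] at this
    have hden : (35 * (x₁ - 1) * (7 * x₁ ^ 2 - 7 * x₁ + 1)) ≠ 0 :=
      mul_ne_zero (mul_ne_zero (by norm_num) (sub_ne_zero.mpr h1)) hQ
    have := (div_eq_zero_iff.mp this).resolve_right hden
    linarith [neg_eq_zero.mp this]
  · intro h
    have : x₆ * y₆ - 1 / 7 = 0 := by rw [key, h]; simp
    linarith
end

section
/- If a perfect Mondrian k-partition of the unit square S exists, and the partition of the unit square obtained by scaling vertical sides by k/(k+1) and appending a new bottom rectangle of dimensions 1 × 1/(k+1) yields rectangles of area 1/(k+1) each, then in particular: for the explicit construction starting from the 7-partition with √19 side lengths, the resulting 8 rectangles all have area 1/8 and are pairwise non-congruent, since 1 is not among the scaled horizontal sides and 1/8 is not among the scaled vertical sides. -/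
open Real

set_option maxHeartbeats 2000000 in
theorem mondrian8_from_mondrian7 (x' y' : Fin 8 → ℝ)
    (hx : x' = ![(8 + Real.sqrt 19) / 15, (7 - Real.sqrt 19) / 15,
      (7 + Real.sqrt 19) / 15, (8 - Real.sqrt 19) / 15, 3 / 5,
      (-1 + Real.sqrt 19) / 15, (1 + Real.sqrt 19) / 15, 1])
    (hy : y' = ![(7 / 8) * ((8 - Real.sqrt 19) / 21), (7 / 8) * ((7 + Real.sqrt 19) / 14),
      (7 / 8) * ((7 - Real.sqrt 19) / 14), (7 / 8) * ((8 + Real.sqrt 19) / 21),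
      (7 / 8) * (5 / 21),
      (7 / 8) * ((5 + 5 * Real.sqrt 19) / 42), (7 / 8) * ((-5 + 5 * Real.sqrt 19) / 42),
      1 / 8]) :
    (∀ i, x' i * y' i = 1 / 8) ∧
    (∀ i j, i ≠ j → ({x' i, y' i} : Set ℝ) ≠ {x' j, y' j}) := by
  have hs2 : Real.sqrt 19 ^ 2 = 19 := Real.sq_sqrt (by norm_num)
  have hs0 : 0 ≤ Real.sqrt 19 := Real.sqrt_nonneg 19
  have hlb : (4.35 : ℝ) < Real.sqrt 19 := by nlinarith
  have hub : Real.sqrt 19 < 4.36 := by nlinarith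
  subst hx hy
  constructor
  · simp only [Fin.forall_fin_succ, Matrix.cons_val_zero, Matrix.cons_val_succ,
      IsEmpty.forall_iff, and_true]
    and_intros <;> nlinarith [hs2]
  · simp only [Fin.forall_fin_succ, Matrix.cons_val_zero, Matrix.cons_val_succ,
      IsEmpty.forall_iff, and_true]
    and_intros <;>
    · intro hne h
      rw [Set.pair_eq_pair_iff] at h
      first
        | exact hne rfl
        | rcases h with ⟨h1, h2⟩ | ⟨h1, h2⟩ <;> nlinarith [hs2, hlb, hub]
end
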